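/- Let 𝔾 = (G, ε, δ) be a comonad on a category C, X an object, and f : 𝔾X → 𝔾X a semi-simplicial map of the augmented simplicial object 𝔾X commuting with the identity on X (i.e., ε_X ∘ f₀ = ε_X, and f commutes with all face maps). Then f is simplicially homotopic to the identity on 𝔾X: the morphisms hⁿᵢ = G^{i+1}(f_{n−i}) ∘ σᵢ : G^{n+1}X → G^{n+2}X, for n ≥ 0 and 0 ≤ i ≤ n, constitute a simplicial homotopy from f to the identity. -/

import Mathlib

/-!
The homotopy starts from the codegeneracy `δ`: `hⁿ₀ = δ ≫ G fₙ`, and `hⁿ⁺¹ᵢ₊₁ = G hⁿᵢ`.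
Since also `∂ᵢ₊₁ = G ∂ᵢ`, each simplicial identity is either `G` applied to the same identity
one degree lower, or has `i = 0` or `j = 0`. These base cases are identities of the comonad:
naturality of `ε` and `δ`, the counit laws `δ ≫ ε_G = 𝟙 = δ ≫ G ε`, and the hypothesis that
`f` commutes with the faces and the augmentation.
-/

open CategoryTheory

namespace Statement13

variable {C : Type*} [Category C]

/-- Iterated application of the comonad functor: `iterObj G X n = GⁿX`. -/
def iterObj (G : Comonad C) (X : C) : ℕ → C
  | 0 => X
  | n + 1 => G.obj (iterObj G X n)

/-- Face operators of the comonad resolution `𝔾X`: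
`face G X n i : Gⁿ⁺¹X ⟶ GⁿX` is `∂ᵢ = Gⁱ ε_{Gⁿ⁻ⁱX}` (meaningful for `i ≤ n`);
`face G X 0 0 = ε_X` is the augmentation. -/
def face (G : Comonad C) (X : C) : (n i : ℕ) → (iterObj G X (n + 1) ⟶ iterObj G X n)
  | n, 0 => G.ε.app (iterObj G X n)
  | 0, _ + 1 => G.ε.app X
  | n + 1, i + 1 => G.toFunctor.map (face G X n i)

/-- Degeneracy operators of the comonad resolution `𝔾X`:
`degen G X n i : Gⁿ⁺¹X ⟶ Gⁿ⁺²X` is `σᵢ = Gⁱ δ_{Gⁿ⁻ⁱX}` (meaningful for `i ≤ n`). -/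
def degen (G : Comonad C) (X : C) : (n i : ℕ) → (iterObj G X (n + 1) ⟶ iterObj G X (n + 2))
  | n, 0 => G.δ.app (iterObj G X n)
  | 0, _ + 1 => G.δ.app X
  | n + 1, i + 1 => G.toFunctor.map (degen G X n i)

/-- Given a family `f` with `fₙ : Gⁿ⁺¹X ⟶ Gⁿ⁺¹X`, the morphisms
`hⁿᵢ = Gⁱ⁺¹(f_{n−i}) ∘ σᵢ : Gⁿ⁺¹X ⟶ Gⁿ⁺²X` (for `0 ≤ i ≤ n`), defined here recursively
via `hⁿ₀ = G(fₙ) ∘ σ₀` and `hⁿ⁺¹ᵢ₊₁ = G(hⁿᵢ)`. -/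
def htpy (G : Comonad C) (X : C) (f : ∀ n : ℕ, iterObj G X (n + 1) ⟶ iterObj G X (n + 1)) :
    (n i : ℕ) → (iterObj G X (n + 1) ⟶ iterObj G X (n + 2))
  | n, 0 => degen G X n 0 ≫ G.toFunctor.map (f n)
  | 0, _ + 1 => degen G X 0 0 ≫ G.toFunctor.map (f 0)
  | n + 1, i + 1 => G.toFunctor.map (htpy G X f n i)

end Statement13

namespace CategoryTheory.Comonad

variable {C : Type*} [Category C] (G : Comonad C)

lemma δ_map_comp_ε {Y Z : C} (g : G.obj Y ⟶ Z) : (G.δ.app Y ≫ G.map g) ≫ G.ε.app Z = g := by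
  rw [Category.assoc, G.ε.naturality, Functor.id_map, G.left_counit_assoc]

lemma δ_map_comp_map_ε {Y Z : C} {g : G.obj Y ⟶ G.obj Z} {k : Y ⟶ Z}
    (h : g ≫ G.ε.app Z = G.ε.app Y ≫ k) :
    (G.δ.app Y ≫ G.map g) ≫ G.map (G.ε.app Z) = G.map k := by
  rw [Category.assoc, ← G.map_comp, h, G.map_comp, G.right_counit_assoc]

lemma δ_map_comp_map_map {Y Y' Z Z' : C} {g : G.obj Y ⟶ G.obj Y'} {d : Y' ⟶ Z} {d' : Y ⟶ Z'}
    {k : G.obj Z' ⟶ G.obj Z} (h : g ≫ G.map d = G.map d' ≫ k) :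
    (G.δ.app Y ≫ G.map g) ≫ G.map (G.map d) = G.map d' ≫ G.δ.app Z' ≫ G.map k := by
  rw [Category.assoc, ← G.map_comp, h, G.map_comp]
  exact (G.δ.naturality_assoc d' _).symm

end CategoryTheory.Comonad

namespace Statement13

variable {C : Type*} [Category C]
  (G : Comonad C) (X : C) (f : ∀ n : ℕ, iterObj G X (n + 1) ⟶ iterObj G X (n + 1))

lemma face_zero (n : ℕ) : face G X n 0 = G.ε.app (iterObj G X n) := by
  cases n <;> rfl

lemma htpy_zero (n : ℕ) : htpy G X f n 0 = G.δ.app (iterObj G X n) ≫ G.map (f n) := by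
  cases n <;> rfl

lemma htpy_zero_comp_face_zero (n : ℕ) : htpy G X f n 0 ≫ face G X (n + 1) 0 = f n := by
  rw [htpy_zero, face_zero]
  exact G.δ_map_comp_ε (f n)

lemma htpy_self_comp_face_succ_self (haug : f 0 ≫ face G X 0 0 = face G X 0 0) (n : ℕ) :
    htpy G X f n n ≫ face G X (n + 1) (n + 1) = 𝟙 (iterObj G X (n + 1)) := by
  induction n with
  | zero =>
    exact (G.δ_map_comp_map_ε (haug.trans (Category.comp_id _).symm)).trans (G.map_id X)
  | succ n ih => exact (G.map_comp _ _).symm.trans ((congrArg G.map ih).trans (G.map_id _))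

lemma htpy_succ_comp_face_of_le {n i j : ℕ} (hij : i ≤ j) (hjn : j ≤ n) :
    htpy G X f (n + 1) (j + 1) ≫ face G X (n + 2) i = face G X (n + 1) i ≫ htpy G X f n j := by
  induction i generalizing n j with
  | zero =>
    rw [face_zero, face_zero]
    exact G.ε.naturality (htpy G X f n j)
  | succ i ih =>
    obtain ⟨j, rfl⟩ := Nat.exists_eq_add_one.mpr (show 0 < j by omega)
    obtain ⟨n, rfl⟩ := Nat.exists_eq_add_one.mpr (show 0 < n by omega)
    -- both sides are, by definition, `G.map` applied to the two sides of the previous case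
    exact (G.map_commSq ⟨ih (by omega) (by omega)⟩).w

lemma htpy_succ_comp_face_succ
    (hface : ∀ n, f (n + 1) ≫ face G X (n + 1) 0 = face G X (n + 1) 0 ≫ f n)
    {n i : ℕ} (hin : i < n) :
    htpy G X f n (i + 1) ≫ face G X (n + 1) (i + 1) =
      htpy G X f n i ≫ face G X (n + 1) (i + 1) := by
  obtain ⟨n, rfl⟩ := Nat.exists_eq_add_one.mpr (show 0 < n by omega)
  induction i generalizing n with
  | zero =>
    have h_one : htpy G X f (n + 1) 1 ≫ face G X (n + 2) 1 = G.map (f n) :=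
      (G.map_comp _ _).symm.trans (congrArg G.map (htpy_zero_comp_face_zero G X f n))
    rw [h_one, htpy_zero]
    exact (G.δ_map_comp_map_ε (hface n)).symm
  | succ i ih =>
    obtain ⟨n, rfl⟩ := Nat.exists_eq_add_one.mpr (show 0 < n by omega)
    exact (G.map_commSq ⟨ih n (by omega)⟩).w

lemma htpy_comp_face_add_two_of_le
    (hface : ∀ n i, i ≤ n →
      f (n + 1) ≫ face G X (n + 1) (i + 1) = face G X (n + 1) (i + 1) ≫ f n)
    {n j k : ℕ} (hjk : j ≤ k) (hkn : k ≤ n) :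
    htpy G X f (n + 1) j ≫ face G X (n + 2) (k + 2) =
      face G X (n + 1) (k + 1) ≫ htpy G X f n j := by
  induction j generalizing n k with
  | zero =>
    rw [htpy_zero, htpy_zero]
    exact G.δ_map_comp_map_map (hface n k hkn)
  | succ j ih =>
    obtain ⟨k, rfl⟩ := Nat.exists_eq_add_one.mpr (show 0 < k by omega)
    obtain ⟨n, rfl⟩ := Nat.exists_eq_add_one.mpr (show 0 < n by omega)
    exact (G.map_commSq ⟨ih (by omega) (by omega)⟩).w

/-- Let `f : 𝔾X ⟶ 𝔾X` be a semi-simplicial map of the comonad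
resolution commuting with the identity on `X`.  Then the morphisms
`hⁿᵢ = Gⁱ⁺¹(f_{n−i}) ∘ σᵢ` constitute a simplicial homotopy from `f` to the identity. -/
theorem statement13 (G : Comonad C) (X : C)
    (f : ∀ n : ℕ, iterObj G X (n + 1) ⟶ iterObj G X (n + 1))
    (haug : f 0 ≫ face G X 0 0 = face G X 0 0)
    (hface : ∀ n i, i ≤ n + 1 →
      f (n + 1) ≫ face G X (n + 1) i = face G X (n + 1) i ≫ f n) :
    (∀ n, htpy G X f n 0 ≫ face G X (n + 1) 0 = f n) ∧
    (∀ n, htpy G X f n n ≫ face G X (n + 1) (n + 1) = 𝟙 (iterObj G X (n + 1))) ∧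
    (∀ n i j, i < j → j ≤ n + 1 →
      htpy G X f (n + 1) j ≫ face G X (n + 2) i = face G X (n + 1) i ≫ htpy G X f n (j - 1)) ∧
    (∀ n i, 1 ≤ i → i ≤ n →
      htpy G X f n i ≫ face G X (n + 1) i = htpy G X f n (i - 1) ≫ face G X (n + 1) i) ∧
    (∀ n i j, j + 1 < i → i ≤ n + 2 → j ≤ n + 1 →
      htpy G X f (n + 1) j ≫ face G X (n + 2) i = face G X (n + 1) (i - 1) ≫ htpy G X f n j) := by
  refine ⟨htpy_zero_comp_face_zero G X f, htpy_self_comp_face_succ_self G X f haug, ?_, ?_, ?_⟩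
  · rintro n i (_ | j) hij hjn
    · omega
    · exact htpy_succ_comp_face_of_le G X f (by omega) (by omega)
  · rintro n (_ | i) hi hin
    · omega
    · exact htpy_succ_comp_face_succ G X f (fun n => hface n 0 (by omega)) (by omega)
  · rintro n (_ | _ | k) j hjk hkn -
    · omega
    · omega
    · exact htpy_comp_face_add_two_of_le G X f (fun n i hi => hface n (i + 1) (by omega))
        (by omega) (by omega)

end Statement13
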